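/- arXiv:2410.00602 — 4 statements merged into one kernel-verified Lean document; each statement's English description precedes it below -/
import Mathlib

section
/- Let f : [0,∞) → ℝ be continuous with f(0) ≥ 0. Define l(t) = sup_{0≤s≤t} (f(s))⁻ (the negative part) and g(t) = f(t) + l(t). Then the pair (g,l) solves the Skorokhod problem for f, i.e., g(t) ≥ 0 for all t ≥ 0, l is non-decreasing with l(0)=0, and l increases only at times t where g(t)=0 (the measure dl is carried by {s : g(s)=0}). -/
/-- Skorokhod reflection: `g = f + l` with `l t = sup_{0≤s≤t} (f s)⁻` solves the
Skorokhod problem for a continuous `f` with `f 0 ≥ 0`. -/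
theorem skorokhod_existence
    (f : ℝ → ℝ) (hf : ContinuousOn f (Set.Ici 0)) (hf0 : 0 ≤ f 0)
    (l : ℝ → ℝ) (hl : ∀ t, l t = sSup ((fun s => max (-(f s)) 0) '' Set.Icc 0 t))
    (g : ℝ → ℝ) (hg : ∀ t, g t = f t + l t) :
    (∀ t, 0 ≤ t → 0 ≤ g t) ∧
    (∀ s t, 0 ≤ s → s ≤ t → l s ≤ l t) ∧
    l 0 = 0 ∧
    (∀ s t, 0 ≤ s → s ≤ t → (∀ u ∈ Set.Icc s t, g u ≠ 0) → l s = l t) := by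
  set h : ℝ → ℝ := fun s => max (-(f s)) 0 with hh
  have hcont : ContinuousOn h (Set.Ici 0) := (hf.neg.sup continuousOn_const)
  have hbdd : ∀ a b : ℝ, 0 ≤ a → BddAbove (h '' Set.Icc a b) := by
    intro a b ha
    exact (isCompact_Icc.image_of_continuousOn
      (hcont.mono (fun x hx => le_trans ha hx.1))).bddAbove
  have hne : ∀ a b : ℝ, a ≤ b → (h '' Set.Icc a b).Nonempty :=
    fun a b hab => (Set.nonempty_Icc.2 hab).image h
  have hle : ∀ t u : ℝ, 0 ≤ t → u ∈ Set.Icc (0:ℝ) t → h u ≤ l t := by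
    intro t u ht hu
    rw [hl t]
    exact le_csSup (hbdd 0 t le_rfl) ⟨u, hu, rfl⟩
  have hmono : ∀ s t : ℝ, 0 ≤ s → s ≤ t → l s ≤ l t := by
    intro s t hs hst
    rw [hl s, hl t]
    exact csSup_le_csSup (hbdd 0 t le_rfl) (hne 0 s hs)
      (Set.image_mono (Set.Icc_subset_Icc le_rfl hst))
  have hl0 : l 0 = 0 := by
    rw [hl 0, Set.Icc_self, Set.image_singleton, csSup_singleton]
    simpa [hh] using hf0
  have hlnn : ∀ t, 0 ≤ t → 0 ≤ l t := fun t ht => hl0 ▸ hmono 0 t le_rfl ht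
  have hgnn : ∀ t, 0 ≤ t → 0 ≤ g t := by
    intro t ht
    have h1 : h t ≤ l t := hle t t ht ⟨ht, le_rfl⟩
    have h2 : -(f t) ≤ h t := le_max_left _ _
    rw [hg t]; linarith
  refine ⟨hgnn, hmono, hl0, ?_⟩
  intro s t hs hst hgne
  refine le_antisymm (hmono s t hs hst) ?_
  have hsplit : l t = max (l s) (sSup (h '' Set.Icc s t)) := by
    rw [hl t, hl s, ← Set.Icc_union_Icc_eq_Icc hs hst, Set.image_union]
    exact csSup_union (hbdd 0 s le_rfl) (hne 0 s hs) (hbdd s t hs) (hne s t hst)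
  by_cases hc : sSup (h '' Set.Icc s t) ≤ l s
  · rw [hsplit, max_eq_left hc]
  · push_neg at hc
    exfalso
    obtain ⟨u, hu, hmax⟩ := (isCompact_Icc (a := s) (b := t)).exists_isMaxOn
      (Set.nonempty_Icc.2 hst)
      (hcont.mono (fun x hx => le_trans hs hx.1))
    have hS : sSup (h '' Set.Icc s t) = h u := by
      refine le_antisymm (csSup_le (hne s t hst) ?_) (le_csSup (hbdd s t hs) ⟨u, hu, rfl⟩)
      rintro _ ⟨y, hy, rfl⟩
      exact hmax hy
    have hu0 : 0 ≤ u := le_trans hs hu.1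
    have hlt : l s < h u := hS ▸ hc
    have hltS : l t = h u := by rw [hsplit, hS, max_eq_right (le_of_lt hlt)]
    have hlu : l u = h u := by
      refine le_antisymm (hltS ▸ hmono u t hu0 hu.2) (hle u u hu0 ⟨hu0, le_rfl⟩)
    have hupos : 0 < h u := lt_of_le_of_lt (hlnn s hs) hlt
    have hneg : h u = -(f u) := by
      rcases le_total (-(f u)) 0 with h1 | h1
      · exfalso
        simp only [hh, sup_eq_right.2 h1] at hupos
        exact lt_irrefl 0 hupos
      · simp only [hh, sup_eq_left.2 h1]
    exact hgne u hu (by rw [hg u, hlu, hneg]; ring)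
end

section
/- Let f : [0,T] → ℝ be continuous with f(0) ≥ 0, extended to [-T,0] by f(t) = f(0). Define l(t) = sup_{s∈[0,t]} (f(s))⁻ for t ∈ [0,T]. Then for any 0 ≤ s < t ≤ T, |l(t) - l(s)| ≤ sup_{-T ≤ u ≤ s} |f(t - s + u) - f(u)|. -/
/-- Increment estimate for the regulator term `l t = sup_{s∈[0,t]} (f s)⁻`, for `f`
extended by `f 0` on `[-T,0]`. -/
theorem regulator_increment_estimate
    (T : ℝ) (hT : 0 < T)
    (f : ℝ → ℝ) (hf : ContinuousOn f (Set.Icc 0 T)) (hf0 : 0 ≤ f 0)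
    (hext : ∀ t ∈ Set.Icc (-T) (0 : ℝ), f t = f 0)
    (l : ℝ → ℝ) (hl : ∀ t, l t = sSup ((fun s => max (-(f s)) 0) '' Set.Icc 0 t)) :
    ∀ s t : ℝ, 0 ≤ s → s < t → t ≤ T →
      |l t - l s| ≤ sSup ((fun u => |f (t - s + u) - f u|) '' Set.Icc (-T) s) := by
  intro s t hs hst htT
  set g : ℝ → ℝ := fun x => max (-(f x)) 0 with hg
  -- continuity of f on [-T, T]
  have hfc : ContinuousOn f (Set.Icc (-T) T) := by
    have hF : ContinuousOn (fun x => f (max x 0)) (Set.Icc (-T) T) := by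
      apply hf.comp (Continuous.continuousOn (by continuity))
      intro x hx
      simp only [Set.mem_Icc] at hx ⊢
      exact ⟨le_max_right _ _, max_le hx.2 hT.le⟩
    apply hF.congr
    intro x hx
    show f x = f (max x 0)
    rcases le_or_gt 0 x with h | h
    · rw [max_eq_left h]
    · rw [max_eq_right h.le, hext x ⟨hx.1, h.le⟩]
  have hgc : ContinuousOn g (Set.Icc (-T) T) := hfc.neg.sup continuousOn_const
  have hsub : ∀ r : ℝ, 0 ≤ r → r ≤ T → Set.Icc (0:ℝ) r ⊆ Set.Icc (-T) T := by
    intro r _ hr x hx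
    exact ⟨le_trans (by linarith) hx.1, le_trans hx.2 hr⟩
  have hbt : BddAbove (g '' Set.Icc 0 t) :=
    (IsCompact.image_of_continuousOn isCompact_Icc
      (hgc.mono (hsub t (by linarith) htT))).bddAbove
  have hbs : BddAbove (g '' Set.Icc 0 s) :=
    (IsCompact.image_of_continuousOn isCompact_Icc
      (hgc.mono (hsub s hs (by linarith)))).bddAbove
  have hls0 : 0 ≤ l s := by
    rw [hl s]
    have hmem : g 0 ∈ g '' Set.Icc 0 s := ⟨0, ⟨le_refl _, hs⟩, rfl⟩
    have h0 : g 0 = 0 := by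
      simp only [hg]
      exact max_eq_right (neg_nonpos.mpr hf0)
    have := le_csSup hbs hmem
    linarith
  have hmono : l s ≤ l t := by
    rw [hl s, hl t]
    apply csSup_le_csSup hbt
    · exact ⟨g 0, ⟨0, ⟨le_refl _, hs⟩, rfl⟩⟩
    · exact Set.image_mono (Set.Icc_subset_Icc_right hst.le)
  set M := sSup ((fun u => |f (t - s + u) - f u|) '' Set.Icc (-T) s) with hM
  have hMb : BddAbove ((fun u => |f (t - s + u) - f u|) '' Set.Icc (-T) s) := by
    apply (IsCompact.image_of_continuousOn isCompact_Icc ?_).bddAbove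
    apply ContinuousOn.abs
    apply ContinuousOn.sub
    · apply hfc.comp (Continuous.continuousOn (by continuity))
      intro u hu
      simp only [Set.mem_Icc] at hu ⊢
      constructor <;> linarith [hu.1, hu.2]
    · exact hfc.mono (fun u hu => ⟨hu.1, le_trans hu.2 (by linarith)⟩)
  have hM0 : 0 ≤ M :=
    le_trans (abs_nonneg _) (le_csSup hMb ⟨-T, ⟨le_refl _, by linarith⟩, rfl⟩)
  have key : l t ≤ l s + M := by
    rw [hl t]
    apply Real.sSup_le
    · rintro x ⟨y, hy, rfl⟩
      have hu : y - (t - s) ∈ Set.Icc (-T) s :=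
        ⟨by linarith [hy.1], by linarith [hy.2]⟩
      have habs : |f (t - s + (y - (t - s))) - f (y - (t - s))| ≤ M :=
        le_csSup hMb ⟨y - (t - s), hu, rfl⟩
      have heq : t - s + (y - (t - s)) = y := by ring
      rw [heq] at habs
      have hlip : g y ≤ g (y - (t - s)) + |f y - f (y - (t - s))| := by
        have h1 : f (y - (t - s)) - f y ≤ |f y - f (y - (t - s))| := by
          rw [abs_sub_comm]; exact le_abs_self _
        have h2 : -f (y - (t - s)) ≤ g (y - (t - s)) := le_max_left _ _
        have h3 : (0:ℝ) ≤ g (y - (t - s)) := le_max_right _ _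
        have habs0 : (0:ℝ) ≤ |f y - f (y - (t - s))| := abs_nonneg _
        apply max_le <;> linarith
      have hgu : g (y - (t - s)) ≤ l s := by
        rcases le_or_gt 0 (y - (t - s)) with h | h
        · rw [hl s]
          exact le_csSup hbs ⟨y - (t - s), ⟨h, by linarith [hy.2]⟩, rfl⟩
        · have hfe : f (y - (t - s)) = f 0 := hext _ ⟨hu.1, h.le⟩
          have : g (y - (t - s)) = 0 := by
            simp only [hg, hfe]
            exact max_eq_right (neg_nonpos.mpr hf0)
          linarith
      linarith
    · linarith
  rw [abs_of_nonneg (by linarith)]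
  linarith
end

section
/- Let f : [0,T] → ℝ be continuous with f(0) ≥ 0 and set l(t) = sup_{s∈[0,t]}(f(s))⁻. Then l is non-decreasing on [0,T], l(0) = 0, l is continuous, and f(t) + l(t) ≥ 0 for all t ∈ [0,T]. -/
/-- Basic properties of the regulator `l t = sup_{s∈[0,t]} (f s)⁻`: it is
non-decreasing, vanishes at `0`, is continuous, and `f + l ≥ 0` on `[0,T]`. -/
theorem regulator_properties
    (T : ℝ) (hT : 0 < T)
    (f : ℝ → ℝ) (hf : ContinuousOn f (Set.Icc 0 T)) (hf0 : 0 ≤ f 0)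
    (l : ℝ → ℝ) (hl : ∀ t, l t = sSup ((fun s => max (-(f s)) 0) '' Set.Icc 0 t)) :
    MonotoneOn l (Set.Icc 0 T) ∧
    l 0 = 0 ∧
    ContinuousOn l (Set.Icc 0 T) ∧
    (∀ t ∈ Set.Icc (0 : ℝ) T, 0 ≤ f t + l t) := by
  set g : ℝ → ℝ := fun s => max (-(f s)) 0 with hg_def
  have hg : ContinuousOn g (Set.Icc 0 T) := hf.neg.sup continuousOn_const
  have hbdd : ∀ t ∈ Set.Icc (0:ℝ) T, BddAbove (g '' Set.Icc 0 t) := by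
    intro t ht
    exact (isCompact_Icc.image_of_continuousOn
      (hg.mono (Set.Icc_subset_Icc_right ht.2))).bddAbove
  have hne : ∀ t ∈ Set.Icc (0:ℝ) T, (g '' Set.Icc 0 t).Nonempty := by
    intro t ht
    exact ⟨g 0, Set.mem_image_of_mem g (Set.left_mem_Icc.2 ht.1)⟩
  have hmono : MonotoneOn l (Set.Icc 0 T) := by
    intro s hs t ht hst
    rw [hl s, hl t]
    exact csSup_le_csSup (hbdd t ht) (hne s hs)
      (Set.image_mono (f := g) (Set.Icc_subset_Icc_right hst))
  have hl0 : l 0 = 0 := by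
    rw [hl 0, Set.Icc_self, Set.image_singleton, csSup_singleton]
    simp only [hg_def]
    exact max_eq_right (neg_nonpos.2 hf0)
  have hge : ∀ t ∈ Set.Icc (0:ℝ) T, g t ≤ l t := by
    intro t ht
    rw [hl t]
    exact le_csSup (hbdd t ht) (Set.mem_image_of_mem g (Set.right_mem_Icc.2 ht.1))
  have key : ∀ ε > (0:ℝ), ∃ δ > (0:ℝ), ∀ a ∈ Set.Icc (0:ℝ) T, ∀ b ∈ Set.Icc (0:ℝ) T,
      a ≤ b → b - a < δ → l b ≤ l a + ε := by
    intro ε hε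
    obtain ⟨δ, hδ, H⟩ := Metric.uniformContinuousOn_iff.1
      (isCompact_Icc.uniformContinuousOn_of_continuous hg) ε hε
    refine ⟨δ, hδ, ?_⟩
    intro a ha b hb hab hba
    rw [hl b]
    apply csSup_le (hne b hb)
    rintro x ⟨u, hu, rfl⟩
    by_cases h : u ≤ a
    · have h1 : g u ≤ l a := by
        rw [hl a]
        exact le_csSup (hbdd a ha) (Set.mem_image_of_mem g ⟨hu.1, h⟩)
      linarith
    · push_neg at h
      have hua : u ∈ Set.Icc (0:ℝ) T := ⟨hu.1, hu.2.trans hb.2⟩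
      have h2 : dist (g u) (g a) < ε := by
        refine H u hua a ha ?_
        rw [Real.dist_eq, abs_lt]
        constructor <;> [linarith [hu.2]; linarith [hu.2]]
      rw [Real.dist_eq] at h2
      have h3 := abs_lt.1 h2
      have h4 : g a ≤ l a := hge a ha
      linarith [h3.2]
  have hcont : ContinuousOn l (Set.Icc 0 T) := by
    rw [Metric.continuousOn_iff]
    intro t ht ε hε
    obtain ⟨δ, hδ, H⟩ := key (ε/2) (by linarith)
    refine ⟨δ, hδ, ?_⟩
    intro s hs hst
    rw [Real.dist_eq] at hst ⊢
    rw [abs_lt] at hst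
    rcases le_total s t with h | h
    · have h1 : l s ≤ l t := hmono hs ht h
      have h2 : l t ≤ l s + ε/2 := H s hs t ht h (by linarith [hst.1])
      rw [abs_lt]; constructor <;> linarith
    · have h1 : l t ≤ l s := hmono ht hs h
      have h2 : l s ≤ l t + ε/2 := H t ht s hs h (by linarith [hst.2])
      rw [abs_lt]; constructor <;> linarith
  refine ⟨hmono, hl0, hcont, ?_⟩
  intro t ht
  have h1 : g t ≤ l t := hge t ht
  have h2 : -(f t) ≤ g t := le_max_left _ _
  linarith
end

section
/- Let f, h : [0,T] → ℝ be continuous with f(0) = h(0) ≥ 0, and define lf(t) = sup_{0≤s≤t}(f(s))⁻ and lh(t) = sup_{0≤s≤t}(h(s))⁻. Then for all t ∈ [0,T], |lf(t) - lh(t)| ≤ sup_{0≤s≤t} |f(s) - h(s)|, and consequently |(f(t)+lf(t)) - (h(t)+lh(t))| ≤ 2 sup_{0≤s≤t}|f(s)-h(s)|. -/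
/-- Lipschitz continuity of the one-dimensional Skorokhod map in the uniform
norm: the regulators differ by at most the uniform distance of the inputs, and
the reflected paths by at most twice that distance. -/
theorem skorokhod_map_lipschitz (T : ℝ) (hT : 0 < T)
    (f h : ℝ → ℝ)
    (hf : ContinuousOn f (Set.Icc 0 T)) (hh : ContinuousOn h (Set.Icc 0 T))
    (h0 : f 0 = h 0) (h0' : 0 ≤ f 0)
    (lf lh : ℝ → ℝ)
    (hlf : ∀ t, lf t = sSup ((fun s => max (-(f s)) 0) '' Set.Icc 0 t))
    (hlh : ∀ t, lh t = sSup ((fun s => max (-(h s)) 0) '' Set.Icc 0 t)) :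
    ∀ t ∈ Set.Icc (0 : ℝ) T,
      |lf t - lh t| ≤ sSup ((fun s => |f s - h s|) '' Set.Icc 0 t) ∧
      |(f t + lf t) - (h t + lh t)| ≤
        2 * sSup ((fun s => |f s - h s|) '' Set.Icc 0 t) := by
  intro t ht
  obtain ⟨ht0, htT⟩ := ht
  have hsub : Set.Icc (0:ℝ) t ⊆ Set.Icc 0 T := Set.Icc_subset_Icc le_rfl htT
  have hcompact : IsCompact (Set.Icc (0:ℝ) t) := isCompact_Icc
  have hne : (Set.Icc (0:ℝ) t).Nonempty := Set.nonempty_Icc.mpr ht0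
  have hfc : ContinuousOn f (Set.Icc 0 t) := hf.mono hsub
  have hhc : ContinuousOn h (Set.Icc 0 t) := hh.mono hsub
  -- bounded above facts
  have bddF : BddAbove ((fun s => max (-(f s)) 0) '' Set.Icc 0 t) :=
    (hcompact.bddAbove_image (((hfc.neg).sup continuousOn_const)))
  have bddH : BddAbove ((fun s => max (-(h s)) 0) '' Set.Icc 0 t) :=
    (hcompact.bddAbove_image (((hhc.neg).sup continuousOn_const)))
  have bddD : BddAbove ((fun s => |f s - h s|) '' Set.Icc 0 t) :=
    (hcompact.bddAbove_image ((hfc.sub hhc).abs))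
  set M := sSup ((fun s => |f s - h s|) '' Set.Icc 0 t) with hM
  have hMel : ∀ s ∈ Set.Icc (0:ℝ) t, |f s - h s| ≤ M := fun s hs =>
    le_csSup bddD ⟨s, hs, rfl⟩
  have key : ∀ (a b : ℝ → ℝ), BddAbove ((fun s => max (-(b s)) 0) '' Set.Icc 0 t) →
      (∀ s ∈ Set.Icc (0:ℝ) t, |a s - b s| ≤ M) →
      sSup ((fun s => max (-(a s)) 0) '' Set.Icc 0 t)
        ≤ sSup ((fun s => max (-(b s)) 0) '' Set.Icc 0 t) + M := by
    intro a b bddb habs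
    apply csSup_le (hne.image _)
    rintro x ⟨s, hs, rfl⟩
    have h1 : max (-(b s)) 0 ≤ sSup ((fun s => max (-(b s)) 0) '' Set.Icc 0 t) :=
      le_csSup bddb ⟨s, hs, rfl⟩
    have h2 : max (-(a s)) 0 ≤ max (-(b s)) 0 + |a s - b s| := by
      apply max_le
      · have : -(a s) ≤ -(b s) + |a s - b s| := by
          have := neg_abs_le (a s - b s); linarith [this]
        exact this.trans (add_le_add_left (le_max_left _ _) _)
      · positivity
    linarith [habs s hs]
  have hfle : lf t ≤ lh t + M := by
    rw [hlf, hlh]; exact key f h bddH hMel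
  have hhle : lh t ≤ lf t + M := by
    rw [hlh, hlf]
    exact key h f bddF (fun s hs => by rw [abs_sub_comm]; exact hMel s hs)
  have h1 : |lf t - lh t| ≤ M := abs_sub_le_iff.mpr ⟨by linarith, by linarith⟩
  refine ⟨h1, ?_⟩
  have h2 : |f t - h t| ≤ M := hMel t ⟨ht0, le_rfl⟩
  calc |(f t + lf t) - (h t + lh t)| ≤ |f t - h t| + |lf t - lh t| := by
        have : (f t + lf t) - (h t + lh t) = (f t - h t) + (lf t - lh t) := by ring
        rw [this]; exact abs_add_le _ _
    _ ≤ 2 * M := by linarith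
end
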